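/- Every kid digit string s in which no digit appears more than 3 times consecutively is eventually periodic under Z with preperiod plus period at most 9: there exist m ≤ 8 and 1 ≤ τ ≤ 2 such that Z^{m+τ}(s) = Z^m(s). -/

import Mathlib

/-- Run-length encoding of a digit string. -/
def rle : List ℕ → List (ℕ × ℕ)
  | [] => []
  | a :: t =>
    match rle t with
    | [] => [(a, 1)]
    | (b, n) :: r => if a = b then (b, n + 1) :: r else (a, 1) :: (b, n) :: r

/-- The "look-and-say-the-biggest" map: each maximal run of the digit `a` of length `n`
is replaced by the decimal digits of `max n a` followed by the digit `a`.
(When `n ≤ 9` this is just the two digits `max n a`, `a`.) -/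
def Z (s : List ℕ) : List ℕ :=
  ((rle s).map fun p => (Nat.digits 10 (max p.2 p.1)).reverse ++ [p.1]).flatten

/-- `r` is a run-length representation of the digit string `s`: all run lengths are
positive, consecutive base digits differ, and the expansion of `r` equals `s`. -/
def IsRLE (r : List (ℕ × ℕ)) (s : List ℕ) : Prop :=
  (∀ p ∈ r, 1 ≤ p.2) ∧ (r.map Prod.fst).Chain' (· ≠ ·) ∧
    (r.map fun p => List.replicate p.2 p.1).flatten = s

/-!
On kid strings whose runs have length at most 3, `Z` replaces a run `a^n` by the two digits
`max n a, a`, and the result is again such a string: every digit is at most 3, and four equal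
consecutive digits would need two adjacent runs with the same digit.

At an ascent `u ++ v` (last digit `a` of `u` below the first digit `b` of `v`) the runs of `u`
and `v` are separate, so `Z` acts on `u` and `v` independently. `Z u` still ends in `a` and `Z v`
starts with `max n b ≥ b`, so the ascent survives all iterations. Cutting at ascents reduces the
theorem to non-increasing strings `3^a 2^b 1^c 0^d` with `a, b, c, d ≤ 3`, and for each of these
256 strings a direct computation gives `Z^8 = Z^6`.
-/

open List Function

lemma rle_cons_of_rle_eq_cons {a b n : ℕ} {t : List ℕ} {r : List (ℕ × ℕ)}
    (h : rle t = (b, n) :: r) :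
    rle (a :: t) = if a = b then (b, n + 1) :: r else (a, 1) :: (b, n) :: r := by
  simp [rle, h]

theorem isRLE_rle (s : List ℕ) : IsRLE (rle s) s := by
  induction s with
  | nil => exact ⟨by simp [rle], .nil, rfl⟩
  | cons a t ih =>
    obtain ⟨hpos, hchain, hflat⟩ := ih
    cases h : rle t with
    | nil =>
      obtain rfl : t = [] := by simpa [h] using hflat.symm
      exact ⟨by simp [rle], isChain_singleton a, by simp [rle]⟩
    | cons p r =>
      obtain ⟨b, n⟩ := p
      rw [h] at hpos hchain hflat
      rw [rle_cons_of_rle_eq_cons h]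
      split_ifs with hab
      · subst hab
        refine ⟨?_, hchain, ?_⟩
        · simp only [mem_cons, forall_eq_or_imp] at hpos ⊢
          exact ⟨by omega, hpos.2⟩
        · simpa [replicate_succ] using hflat
      · refine ⟨?_, ?_, ?_⟩
        · simpa using hpos
        · exact isChain_cons_cons.mpr ⟨hab, hchain⟩
        · simpa using hflat

lemma exists_rle_cons (a : ℕ) (t : List ℕ) : ∃ n r, 0 < n ∧ rle (a :: t) = (a, n) :: r := by
  cases h : rle t with
  | nil => exact ⟨1, [], one_pos, by simp [rle, h]⟩
  | cons p r =>
    obtain ⟨b, n⟩ := p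
    rw [rle_cons_of_rle_eq_cons h]
    split_ifs with hab
    · exact ⟨n + 1, r, n.succ_pos, by rw [hab]⟩
    · exact ⟨1, (b, n) :: r, one_pos, rfl⟩

lemma rle_cons_of_forall_head?_ne {a : ℕ} {t : List ℕ} (h : ∀ b ∈ t.head?, a ≠ b) :
    rle (a :: t) = (a, 1) :: rle t := by
  cases t with
  | nil => rfl
  | cons b t =>
    obtain ⟨n, r, -, hr⟩ := exists_rle_cons b t
    rw [rle_cons_of_rle_eq_cons hr, if_neg (h b rfl), hr]

lemma rle_append {u v : List ℕ} (h : ∀ a ∈ u.getLast?, ∀ b ∈ v.head?, a ≠ b) :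
    rle (u ++ v) = rle u ++ rle v := by
  induction u with
  | nil => simp [rle]
  | cons x u ih =>
    cases u with
    | nil => exact rle_cons_of_forall_head?_ne (h x rfl)
    | cons y u =>
      obtain ⟨n, r, -, hr⟩ := exists_rle_cons y u
      have hyuv : rle (y :: u ++ v) = (y, n) :: (r ++ rle v) := by
        rw [ih (by simpa [getLast?_cons_cons] using h), hr, cons_append]
      rw [cons_append, rle_cons_of_rle_eq_cons hyuv, rle_cons_of_rle_eq_cons hr]
      split_ifs <;> rfl

lemma fst_mem_of_mem_rle {s : List ℕ} {p : ℕ × ℕ} (hp : p ∈ rle s) : p.1 ∈ s := by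
  obtain ⟨hpos, -, hflat⟩ := isRLE_rle s
  rw [← hflat, mem_flatten]
  exact ⟨replicate p.2 p.1, mem_map_of_mem hp, mem_replicate.mpr ⟨by grind, rfl⟩⟩

def RunsLE (k : ℕ) (s : List ℕ) : Prop := ∀ x, ¬ replicate (k + 1) x <:+: s

lemma RunsLE.of_infix {k : ℕ} {s t : List ℕ} (hs : RunsLE k s) (ht : t <:+: s) : RunsLE k t :=
  fun x hx => hs x (hx.trans ht)

lemma RunsLE.le_of_replicate_infix {k n x : ℕ} {s : List ℕ} (hs : RunsLE k s)
    (hx : replicate n x <:+: s) : n ≤ k := by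
  by_contra! hkn
  exact hs x (IsInfix.trans (infix_replicate_iff.mpr (by simpa using hkn)) hx)

lemma exists_rle_cons_of_replicate_prefix (a : ℕ) {k : ℕ} {t : List ℕ}
    (h : replicate k a <+: t) : ∃ n r, k < n ∧ rle (a :: t) = (a, n) :: r := by
  induction k generalizing t with
  | zero => exact exists_rle_cons a t
  | succ k ih =>
    obtain ⟨t, rfl, ht⟩ : ∃ t', t = a :: t' ∧ replicate k a <+: t' := by
      cases t with
      | nil => simp at h
      | cons b t =>
        rw [replicate_succ, cons_prefix_cons] at h
        exact ⟨t, by rw [h.1], h.2⟩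
    obtain ⟨n, r, hkn, hr⟩ := ih ht
    exact ⟨n + 1, r, by omega, by rw [rle_cons_of_rle_eq_cons hr, if_pos rfl]⟩

lemma exists_mem_rle_cons_le_snd (a : ℕ) {t : List ℕ} {p : ℕ × ℕ} (hp : p ∈ rle t) :
    ∃ q ∈ rle (a :: t), p.2 ≤ q.2 := by
  cases h : rle t with
  | nil => simp [h] at hp
  | cons q r =>
    obtain ⟨b, n⟩ := q
    rw [h, mem_cons] at hp
    rw [rle_cons_of_rle_eq_cons h]
    split_ifs
    · rcases hp with rfl | hp
      · exact ⟨(b, n + 1), mem_cons_self, by simp⟩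
      · exact ⟨p, mem_cons_of_mem _ hp, le_rfl⟩
    · exact ⟨p, mem_cons_of_mem _ (mem_cons.mpr hp), le_rfl⟩

lemma exists_mem_rle_of_replicate_infix {k x : ℕ} {s : List ℕ}
    (h : replicate (k + 1) x <:+: s) : ∃ p ∈ rle s, k < p.2 := by
  induction s with
  | nil => simp at h
  | cons a t ih =>
    rcases infix_cons_iff.mp h with hpre | hinf
    · rw [replicate_succ, cons_prefix_cons] at hpre
      obtain ⟨rfl, hpre⟩ := hpre
      obtain ⟨n, r, hkn, hr⟩ := exists_rle_cons_of_replicate_prefix x hpre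
      exact ⟨(x, n), by simp [hr], hkn⟩
    · obtain ⟨p, hp, hkp⟩ := ih hinf
      obtain ⟨q, hq, hpq⟩ := exists_mem_rle_cons_le_snd a hp
      exact ⟨q, hq, by omega⟩

theorem runsLE_iff_forall_mem_rle {k : ℕ} {s : List ℕ} : RunsLE k s ↔ ∀ p ∈ rle s, p.2 ≤ k := by
  constructor
  · intro hs p hp
    have hinf := infix_of_mem_flatten (mem_map_of_mem (f := fun p => replicate p.2 p.1) hp)
    rw [(isRLE_rle s).2.2] at hinf
    exact hs.le_of_replicate_infix hinf
  · intro hs x hx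
    obtain ⟨p, hp, hkp⟩ := exists_mem_rle_of_replicate_infix hx
    exact absurd (hs p hp) (by omega)

lemma getLast?_flatten_map {α β : Type*} {l : List α} {f : α → List β} {g : α → β}
    (h : ∀ x ∈ l, (f x).getLast? = some (g x)) : (l.map f).flatten.getLast? = l.getLast?.map g := by
  induction l with
  | nil => rfl
  | cons x l ih =>
    rw [map_cons, flatten_cons, getLast?_append, ih fun y hy => h y (mem_cons_of_mem x hy),
      h x mem_cons_self, getLast?_cons]
    cases l.getLast? <;> rfl

def ZKid (s : List ℕ) : List ℕ :=
  ((rle s).map fun p => [max p.2 p.1, p.1]).flatten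

lemma Z_eq_ZKid {s : List ℕ} (h : ∀ p ∈ rle s, max p.2 p.1 < 10) : Z s = ZKid s := by
  unfold Z ZKid
  congr 1
  refine map_congr_left fun p hp => ?_
  have hpos : max p.2 p.1 ≠ 0 := by have := (isRLE_rle s).1 p hp; omega
  rw [Nat.digits_of_lt 10 _ hpos (h p hp)]
  rfl

lemma ZKid_append {u v : List ℕ} (h : ∀ a ∈ u.getLast?, ∀ b ∈ v.head?, a ≠ b) :
    ZKid (u ++ v) = ZKid u ++ ZKid v := by
  rw [ZKid, rle_append h, map_append, flatten_append]; rfl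

lemma getLast?_ZKid (s : List ℕ) : (ZKid s).getLast? = s.getLast? := by
  obtain ⟨hpos, -, hflat⟩ := isRLE_rle s
  conv_rhs => rw [← hflat]
  rw [ZKid, getLast?_flatten_map (g := Prod.fst) (by simp),
    getLast?_flatten_map (g := Prod.fst) fun p hp => ?_]
  have := hpos p hp
  simp only [getLast?_replicate, ite_eq_right_iff, reduceCtorEq, imp_false]
  omega

lemma exists_head?_ZKid {v : List ℕ} {b : ℕ} (hv : v.head? = some b) :
    ∃ c, (ZKid v).head? = some c ∧ b ≤ c := by
  cases v with
  | nil => simp at hv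
  | cons b' t =>
    obtain rfl : b' = b := by simpa using hv
    obtain ⟨n, r, -, hr⟩ := exists_rle_cons b' t
    exact ⟨max n b', by simp [ZKid, hr], le_max_right n b'⟩

lemma iterate_ZKid_append {u v : List ℕ} {a b : ℕ} (hu : u.getLast? = some a)
    (hv : v.head? = some b) (hab : a < b) (k : ℕ) :
    ZKid^[k] (u ++ v) = ZKid^[k] u ++ ZKid^[k] v := by
  induction k generalizing u v b with
  | zero => rfl
  | succ k ih =>
    obtain ⟨c, hc, hbc⟩ := exists_head?_ZKid hv
    rw [iterate_succ_apply, iterate_succ_apply, iterate_succ_apply,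
      ZKid_append (by simp [hu, hv]; omega)]
    exact ih (by rw [getLast?_ZKid, hu]) hc (by omega)

lemma runsLE_three_flatten_map_pair (f : ℕ × ℕ → ℕ) {l : List (ℕ × ℕ)}
    (hl : (l.map Prod.fst).IsChain (· ≠ ·)) : RunsLE 3 ((l.map fun q => [f q, q.1]).flatten) := by
  induction l with
  | nil => simp [RunsLE]
  | cons q l ih =>
    intro x hx
    simp only [map_cons, flatten_cons, cons_append, nil_append, infix_cons_iff] at hx
    refine hx.elim (fun hpre => ?_) (·.elim (fun hpre => ?_) (ih hl.tail x))
    -- four equal digits starting at `f q` or at `q.1` would force `q.1 = q'.1`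
    all_goals
      cases l with
      | nil => simp [replicate_succ] at hpre
      | cons q' l =>
        simp only [replicate_succ, replicate_zero, map_cons, flatten_cons, cons_append, nil_append,
          cons_prefix_cons] at hpre
        exact (isChain_cons_cons.mp hl).1 (by omega)

lemma runsLE_ZKid (s : List ℕ) : RunsLE 3 (ZKid s) :=
  runsLE_three_flatten_map_pair _ (isRLE_rle s).2.1

lemma le_of_mem_ZKid {b : ℕ} {s : List ℕ} (hs : ∀ d ∈ s, d ≤ b) (hruns : ∀ p ∈ rle s, p.2 ≤ b) :
    ∀ d ∈ ZKid s, d ≤ b := by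
  intro d hd
  obtain ⟨p, hp, hd⟩ : ∃ p ∈ rle s, d = max p.2 p.1 ∨ d = p.1 := by simpa [ZKid] using hd
  have := hs p.1 (fst_mem_of_mem_rle hp)
  have := hruns p hp
  omega

lemma iterate_Z_eq_iterate_ZKid {s : List ℕ} (hkid : ∀ d ∈ s, d ≤ 3) (hruns : RunsLE 3 s)
    (k : ℕ) : Z^[k] s = ZKid^[k] s := by
  induction k generalizing s with
  | zero => rfl
  | succ k ih =>
    have hrle := runsLE_iff_forall_mem_rle.mp hruns
    have hdigit : ∀ p ∈ rle s, max p.2 p.1 < 10 := fun p hp => by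
      have := hrle p hp
      have := hkid p.1 (fst_mem_of_mem_rle hp)
      omega
    rw [iterate_succ_apply, iterate_succ_apply, Z_eq_ZKid hdigit]
    exact ih (le_of_mem_ZKid hkid hrle) (runsLE_ZKid s)

lemma eq_replicate_count_of_sortedGE {s : List ℕ} (hs : s.SortedGE) (hkid : ∀ d ∈ s, d ≤ 3) :
    s = replicate (count 3 s) 3 ++ replicate (count 2 s) 2 ++ replicate (count 1 s) 1 ++
      replicate (count 0 s) 0 := by
  refine Perm.eq_of_sortedGE hs ?_ (perm_iff_count.mpr fun a => ?_)
  · simp only [sortedGE_iff_pairwise, pairwise_append, pairwise_replicate, mem_append,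
      mem_replicate]
    grind
  · by_cases ha : a ≤ 3
    · interval_cases a <;> simp [count_replicate]
    · have : count a s = 0 := count_eq_zero.mpr fun h => ha (hkid a h)
      simp only [this, count_append, count_replicate]
      split_ifs <;> simp_all

lemma iterate_ZKid_eight_eq_six_of_replicate : ∀ a < 4, ∀ b < 4, ∀ c < 4, ∀ d < 4,
    ZKid^[8] (replicate a 3 ++ replicate b 2 ++ replicate c 1 ++ replicate d 0) =
      ZKid^[6] (replicate a 3 ++ replicate b 2 ++ replicate c 1 ++ replicate d 0) := by
  decide

theorem iterate_ZKid_eight_eq_six (s : List ℕ) (hkid : ∀ d ∈ s, d ≤ 3) (hruns : RunsLE 3 s) :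
    ZKid^[8] s = ZKid^[6] s := by
  by_cases hs : s.SortedGE
  · have hcanon := eq_replicate_count_of_sortedGE hs hkid
    generalize count 3 s = a, count 2 s = b, count 1 s = c, count 0 s = d at hcanon
    subst hcanon
    have bound {n x : ℕ} (h : replicate n x <:+: _) : n < 4 :=
      Nat.lt_succ_of_le (hruns.le_of_replicate_infix h)
    exact iterate_ZKid_eight_eq_six_of_replicate
      a (bound (infix_append_left.trans (infix_append_left.trans infix_append_left)))
      b (bound ((infix_append _ _ _).trans infix_append_left))
      c (bound (infix_append _ _ _)) d (bound infix_append_right)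
  · obtain ⟨a, b, ⟨l₁, l₂, rfl⟩, hab⟩ : ∃ a b, (∃ l₁ l₂, s = l₁ ++ a :: b :: l₂) ∧ a < b := by
      simpa [sortedGE_iff_isChain, isChain_iff_forall_rel_of_append_cons_cons] using hs
    have hsplit : l₁ ++ a :: b :: l₂ = (l₁ ++ [a]) ++ b :: l₂ := by simp
    have hu : (l₁ ++ [a]).getLast? = some a := by simp
    rw [hsplit] at hkid hruns ⊢
    rw [iterate_ZKid_append hu rfl hab, iterate_ZKid_append hu rfl hab,
      iterate_ZKid_eight_eq_six (l₁ ++ [a]) (fun d hd => hkid d (mem_append_left _ hd))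
        (hruns.of_infix infix_append_left),
      iterate_ZKid_eight_eq_six (b :: l₂) (fun d hd => hkid d (mem_append_right _ hd))
        (hruns.of_infix infix_append_right)]
termination_by s.length
decreasing_by all_goals subst_vars; simp <;> omega

/-- Small kid seeds: every kid string with run lengths ≤ 3 is eventually periodic
under `Z` with preperiod at most 8 and period at most 2. -/
theorem kid_eventually_periodic (s : List ℕ) (hkid : ∀ d ∈ s, d ≤ 3)
    (hrun : ∀ p ∈ rle s, p.2 ≤ 3) :
    ∃ m ≤ 8, ∃ τ, 1 ≤ τ ∧ τ ≤ 2 ∧ Z^[m + τ] s = Z^[m] s := by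
  have hruns : RunsLE 3 s := runsLE_iff_forall_mem_rle.mpr hrun
  refine ⟨6, by norm_num, 2, by norm_num, le_rfl, ?_⟩
  rw [iterate_Z_eq_iterate_ZKid hkid hruns, iterate_Z_eq_iterate_ZKid hkid hruns]
  exact iterate_ZKid_eight_eq_six s hkid hruns
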